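/- Let G be the graph on V={1,2,3,4} with edge set {(1,3),(1,4),(2,3),(2,4),(3,4)} (the complete graph on 4 vertices minus the edge (1,2)). Fix δ∈(0,1/6) and set α_1=α_2=1/4−δ, α_3=1/2−δ, α_4=3δ. Then α satisfies Ncond for G and Q(G,α) = [ ((1/2−2δ)(1/2+2δ))/(4δ)² + ((1/2−δ)(1/2+δ))/(2δ)² + 3δ(1−3δ)/(1−6δ)² ] / [ 1 + (1/2−2δ)/(4δ) + (1/2−δ)/(2δ) + 3δ/(1−6δ) ]. -/

import Mathlib

/-!
Vertices `0` and `1` (the paper's 1 and 2) are non-adjacent twins with neighbourhood `{2, 3}`.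
For twins `a`, `b` the contributions of `{a}`, `{b}` and `{a, b}` to `∑ T_I` and `∑ E_I` telescope
to those of a single vertex of rate `α a + α b`. Hence `Q` is a sum of three singleton terms, with
rates `1/2 - 2δ`, `1/2 - δ`, `3δ` and Ncond gaps `4δ`, `2δ`, `1 - 6δ`.
-/

open Classical Finset

noncomputable section

def nbr {V : Type} [Fintype V] (G : SimpleGraph V) (S : Finset V) : Finset V :=
  Finset.univ.filter fun j => ∃ i ∈ S, G.Adj i j

def aSum {V : Type} (α : V → ℝ) (S : Finset V) : ℝ := ∑ i ∈ S, α i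

def IsIndep {V : Type} (G : SimpleGraph V) (I : Finset V) : Prop :=
  I.Nonempty ∧ ∀ i ∈ I, ∀ j ∈ I, ¬ G.Adj i j

def indepSets {V : Type} [Fintype V] (G : SimpleGraph V) : Finset (Finset V) :=
  Finset.univ.filter fun I => IsIndep G I

def Ncond {V : Type} [Fintype V] (G : SimpleGraph V) (α : V → ℝ) : Prop :=
  ∀ I ∈ indepSets G, aSum α I < aSum α (nbr G I)

def Tlist {V : Type} [Fintype V] [DecidableEq V] (G : SimpleGraph V) (α : V → ℝ) :
    List V → Finset V → ℝ
  | [], _ => 1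
  | i :: l, P =>
      α i / (aSum α (nbr G (insert i P)) - aSum α (insert i P)) * Tlist G α l (insert i P)

def Erat {V : Type} [Fintype V] [DecidableEq V] (G : SimpleGraph V) (α : V → ℝ) :
    List V → Finset V → ℝ
  | [], _ => 0
  | i :: l, P =>
      aSum α (nbr G (insert i P)) / (aSum α (nbr G (insert i P)) - aSum α (insert i P)) +
        Erat G α l (insert i P)

def TI {V : Type} [Fintype V] [DecidableEq V] (G : SimpleGraph V) (α : V → ℝ) (I : Finset V) : ℝ :=
  ∑ l ∈ I.toList.permutations.toFinset, Tlist G α l ∅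

def EI {V : Type} [Fintype V] [DecidableEq V] (G : SimpleGraph V) (α : V → ℝ) (I : Finset V) : ℝ :=
  ∑ l ∈ I.toList.permutations.toFinset, Erat G α l ∅ * Tlist G α l ∅

def meanQ {V : Type} [Fintype V] [DecidableEq V] (G : SimpleGraph V) (α : V → ℝ) : ℝ :=
  (1 + ∑ I ∈ indepSets G, TI G α I)⁻¹ * ∑ I ∈ indepSets G, EI G α I

def IsWord {V : Type} (G : SimpleGraph V) (w : List V) : Prop :=
  w.Pairwise fun a b => ¬ G.Adj a b

def piHatAux {V : Type} [Fintype V] [DecidableEq V] (G : SimpleGraph V) (α : V → ℝ) :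
    List V → Finset V → ℝ
  | [], _ => 1
  | i :: l, P => α i / aSum α (nbr G (insert i P)) * piHatAux G α l (insert i P)

def piHat {V : Type} [Fintype V] [DecidableEq V] (G : SimpleGraph V) (α : V → ℝ) (w : List V) : ℝ :=
  piHatAux G α w ∅

def addEdge {V : Type} (G : SimpleGraph V) (u v : V) : SimpleGraph V :=
  G ⊔ SimpleGraph.fromEdgeSet {s(u, v)}

end

def Gquasi : SimpleGraph (Fin 4) where
  Adj i j := i ≠ j ∧ ¬((i = 0 ∧ j = 1) ∨ (i = 1 ∧ j = 0))
  symm := by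
    constructor
    rintro i j ⟨h1, h2⟩
    exact ⟨h1.symm, by tauto⟩
  loopless := by
    constructor
    rintro i ⟨h1, _⟩
    exact h1 rfl

instance {V : Type} (G : SimpleGraph V) [DecidableRel G.Adj] (I : Finset V) :
    Decidable (IsIndep G I) :=
  inferInstanceAs (Decidable (I.Nonempty ∧ ∀ i ∈ I, ∀ j ∈ I, ¬ G.Adj i j))

section FCFS

variable {V : Type}

lemma aSum_singleton (α : V → ℝ) (a : V) : aSum α {a} = α a := by
  simp [aSum]

variable [DecidableEq V]

lemma aSum_pair (α : V → ℝ) {a b : V} (hne : a ≠ b) : aSum α {a, b} = α a + α b := by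
  simp [aSum, Finset.sum_pair hne]

lemma toList_permutations_toFinset_singleton (a : V) :
    ({a} : Finset V).toList.permutations.toFinset = {[a]} := by
  ext l
  simp [List.mem_permutations, List.perm_singleton]

lemma toList_permutations_toFinset_pair {a b : V} (hne : a ≠ b) :
    ({a, b} : Finset V).toList.permutations.toFinset = {[a, b], [b, a]} := by
  have hperm : ({a, b} : Finset V).toList.Perm [a, b] := by
    simpa using Finset.toList_insert (s := {b}) (by simpa using hne)
  ext l
  simp only [List.mem_toFinset, List.mem_permutations, Finset.mem_insert, Finset.mem_singleton]
  exact ⟨fun h => List.perm_pair.1 (h.trans hperm),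
    fun h => (List.perm_pair.2 h).trans hperm.symm⟩

variable [Fintype V] (G : SimpleGraph V) (α : V → ℝ)

lemma nbr_insert (a : V) (S : Finset V) : nbr G (insert a S) = nbr G {a} ∪ nbr G S := by
  ext j
  simp [nbr]

lemma TI_singleton (a : V) : TI G α {a} = α a / (aSum α (nbr G {a}) - α a) := by
  rw [TI, toList_permutations_toFinset_singleton, Finset.sum_singleton]
  simp [Tlist, aSum_singleton]

lemma EI_singleton (a : V) :
    EI G α {a} = aSum α (nbr G {a}) / (aSum α (nbr G {a}) - α a) * TI G α {a} := by
  rw [EI, TI_singleton, toList_permutations_toFinset_singleton, Finset.sum_singleton]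
  simp [Tlist, Erat, aSum_singleton]

lemma TI_pair {a b : V} (hne : a ≠ b) :
    TI G α {a, b} = Tlist G α [a, b] ∅ + Tlist G α [b, a] ∅ := by
  rw [TI, toList_permutations_toFinset_pair hne, Finset.sum_pair (by simp [hne])]

lemma EI_pair {a b : V} (hne : a ≠ b) :
    EI G α {a, b} = Erat G α [a, b] ∅ * Tlist G α [a, b] ∅ +
      Erat G α [b, a] ∅ * Tlist G α [b, a] ∅ := by
  rw [EI, toList_permutations_toFinset_pair hne, Finset.sum_pair (by simp [hne])]

variable {G α} {a b : V} (hne : a ≠ b) (htwin : nbr G {b} = nbr G {a})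
  (ha : aSum α (nbr G {a}) - α a ≠ 0) (hb : aSum α (nbr G {a}) - α b ≠ 0)
  (hab : aSum α (nbr G {a}) - (α a + α b) ≠ 0)
include hne htwin ha hb hab

lemma TI_twins :
    TI G α {a} + TI G α {b} + TI G α {a, b} =
      (α a + α b) / (aSum α (nbr G {a}) - (α a + α b)) := by
  rw [TI_singleton, TI_singleton, TI_pair _ _ hne]
  simp only [Tlist, LawfulSingleton.insert_empty_eq, nbr_insert, htwin, Finset.union_self,
    aSum_singleton, aSum_pair _ hne, aSum_pair _ hne.symm, add_comm (α b) (α a)]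
  field_simp
  ring

lemma EI_twins :
    EI G α {a} + EI G α {b} + EI G α {a, b} =
      aSum α (nbr G {a}) * (α a + α b) / (aSum α (nbr G {a}) - (α a + α b)) ^ 2 := by
  rw [EI_singleton, EI_singleton, TI_singleton, TI_singleton, EI_pair _ _ hne]
  simp only [Tlist, Erat, LawfulSingleton.insert_empty_eq, nbr_insert, htwin, Finset.union_self,
    aSum_singleton, aSum_pair _ hne, aSum_pair _ hne.symm, add_comm (α b) (α a)]
  field_simp
  ring

end FCFS

instance : DecidableRel Gquasi.Adj := fun i j =>
  inferInstanceAs (Decidable (i ≠ j ∧ ¬((i = 0 ∧ j = 1) ∨ (i = 1 ∧ j = 0))))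

lemma indepSets_Gquasi : indepSets Gquasi = {{0}, {1}, {2}, {3}, {0, 1}} := by
  rw [indepSets, Finset.filter_congr_decidable]
  decide

lemma sum_indepSets_Gquasi {M : Type*} [AddCommMonoid M] (f : Finset (Fin 4) → M) :
    ∑ I ∈ indepSets Gquasi, f I = f {0} + f {1} + f {0, 1} + f {2} + f {3} := by
  rw [indepSets_Gquasi, Finset.sum_insert (by decide), Finset.sum_insert (by decide),
    Finset.sum_insert (by decide), Finset.sum_insert (by decide), Finset.sum_singleton]
  abel

lemma nbr_Gquasi_zero : nbr Gquasi {0} = {2, 3} := by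
  ext j; fin_cases j <;> simp [nbr, Gquasi]

lemma nbr_Gquasi_one : nbr Gquasi {1} = {2, 3} := by
  ext j; fin_cases j <;> simp [nbr, Gquasi]

lemma nbr_Gquasi_two : nbr Gquasi {2} = {0, 1, 3} := by
  ext j; fin_cases j <;> simp [nbr, Gquasi]

lemma nbr_Gquasi_three : nbr Gquasi {3} = {0, 1, 2} := by
  ext j; fin_cases j <;> simp [nbr, Gquasi]

lemma nbr_Gquasi_one_eq_zero : nbr Gquasi {1} = nbr Gquasi {0} := by
  rw [nbr_Gquasi_one, nbr_Gquasi_zero]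

section QuasiRates

variable {δ : ℝ}

noncomputable def quasiRates (δ : ℝ) : Fin 4 → ℝ := ![1/4 - δ, 1/4 - δ, 1/2 - δ, 3*δ]

lemma quasiRates_zero : quasiRates δ 0 = 1/4 - δ := rfl
lemma quasiRates_one : quasiRates δ 1 = 1/4 - δ := rfl
lemma quasiRates_two : quasiRates δ 2 = 1/2 - δ := rfl
lemma quasiRates_three : quasiRates δ 3 = 3*δ := rfl

lemma aSum_quasiRates_nbr_zero : aSum (quasiRates δ) (nbr Gquasi {0}) = 1/2 + 2*δ := by
  simp [nbr_Gquasi_zero, aSum, quasiRates]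
  ring

lemma aSum_quasiRates_nbr_two : aSum (quasiRates δ) (nbr Gquasi {2}) = 1/2 + δ := by
  simp [nbr_Gquasi_two, aSum, quasiRates]
  ring

lemma aSum_quasiRates_nbr_three : aSum (quasiRates δ) (nbr Gquasi {3}) = 1 - 3*δ := by
  simp [nbr_Gquasi_three, aSum, quasiRates]
  ring

lemma quasiRates_gap_twins :
    aSum (quasiRates δ) (nbr Gquasi {0}) - (quasiRates δ 0 + quasiRates δ 1) = 4*δ := by
  rw [aSum_quasiRates_nbr_zero, quasiRates_zero, quasiRates_one]
  ring

lemma quasiRates_gap_two : aSum (quasiRates δ) (nbr Gquasi {2}) - quasiRates δ 2 = 2*δ := by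
  rw [aSum_quasiRates_nbr_two, quasiRates_two]
  ring

lemma quasiRates_gap_three :
    aSum (quasiRates δ) (nbr Gquasi {3}) - quasiRates δ 3 = 1 - 6*δ := by
  rw [aSum_quasiRates_nbr_three, quasiRates_three]
  ring

variable (h0 : 0 < δ) (h1 : δ < 1/6)
include h0 h1

lemma ncond_quasiRates : Ncond Gquasi (quasiRates δ) := by
  intro I hI
  rw [indepSets_Gquasi] at hI
  simp only [Finset.mem_insert, Finset.mem_singleton] at hI
  rcases hI with rfl | rfl | rfl | rfl | rfl <;>
    simp [nbr_insert, nbr_Gquasi_zero, nbr_Gquasi_one, nbr_Gquasi_two, nbr_Gquasi_three, aSum,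
      quasiRates] <;>
    linarith

lemma sum_TI_quasiRates :
    ∑ I ∈ indepSets Gquasi, TI Gquasi (quasiRates δ) I =
      (1/2 - 2*δ)/(4*δ) + (1/2 - δ)/(2*δ) + 3*δ/(1 - 6*δ) := by
  rw [sum_indepSets_Gquasi, TI_twins (by decide) nbr_Gquasi_one_eq_zero, TI_singleton,
    TI_singleton, quasiRates_gap_twins, quasiRates_gap_two, quasiRates_gap_three]
  all_goals simp only [aSum_quasiRates_nbr_zero, quasiRates_zero, quasiRates_one, quasiRates_two,
    quasiRates_three]
  · ring
  all_goals (apply ne_of_gt; linarith)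

lemma sum_EI_quasiRates :
    ∑ I ∈ indepSets Gquasi, EI Gquasi (quasiRates δ) I =
      (1/2 - 2*δ) * (1/2 + 2*δ) / (4*δ)^2 + (1/2 - δ) * (1/2 + δ) / (2*δ)^2
          + 3*δ*(1 - 3*δ) / (1 - 6*δ)^2 := by
  rw [sum_indepSets_Gquasi, EI_twins (by decide) nbr_Gquasi_one_eq_zero, EI_singleton,
    EI_singleton, TI_singleton, TI_singleton, quasiRates_gap_twins, quasiRates_gap_two,
    quasiRates_gap_three]
  all_goals simp only [aSum_quasiRates_nbr_zero, aSum_quasiRates_nbr_two,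
    aSum_quasiRates_nbr_three, quasiRates_zero, quasiRates_one, quasiRates_two, quasiRates_three]
  · have hδ : δ ≠ 0 := h0.ne'
    have h6 : 1 - 6*δ ≠ 0 := by linarith
    field_simp
    ring
  all_goals (apply ne_of_gt; linarith)

end QuasiRates

theorem stmt2 (δ : ℝ) (h0 : 0 < δ) (h1 : δ < 1/6) :
    Ncond Gquasi ![1/4 - δ, 1/4 - δ, 1/2 - δ, 3*δ] ∧
    meanQ Gquasi ![1/4 - δ, 1/4 - δ, 1/2 - δ, 3*δ] =
      ((1/2 - 2*δ) * (1/2 + 2*δ) / (4*δ)^2 + (1/2 - δ) * (1/2 + δ) / (2*δ)^2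
          + 3*δ*(1 - 3*δ) / (1 - 6*δ)^2) /
        (1 + (1/2 - 2*δ)/(4*δ) + (1/2 - δ)/(2*δ) + 3*δ/(1 - 6*δ)) := by
  refine ⟨ncond_quasiRates h0 h1, ?_⟩
  change meanQ Gquasi (quasiRates δ) = _
  rw [meanQ, sum_TI_quasiRates h0 h1, sum_EI_quasiRates h0 h1, inv_mul_eq_div]
  simp only [add_assoc]
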